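/- arXiv:1711.02979 — 5 statements merged into one kernel-verified Lean document; each statement's English description precedes it below -/
import Mathlib

section
/- Define sequences $(B^p_k)_{k \in \mathbb{Z}}$ for $p \ge 1$ by: $B^1_0 = 2/3$, $B^1_{\pm 1} = 1/6$, $B^1_k = 0$ for $|k| \ge 2$, and recursively $B^p_k = \frac{(p+k+1)^2 B^{p-1}_{k+1} - 2(k^2 - p - p^2) B^{p-1}_k + (p-k+1)^2 B^{p-1}_{k-1}}{2p(2p+1)}$. Then for every $p \ge 1$: $p + 1 = 12 \sum_{k=1}^{p} k^2 B^p_k$. -/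
/-!
Summation by parts turns the recursion `B (p - 1) ↦ B p` into its adjoint acting on test
sequences, and the adjoint maps `1` to a constant and `k ↦ k ^ 2` into the span of `1` and
`k ↦ k ^ 2`. Hence, by induction on `p`, the total mass `∑ₖ B p k` stays `1` and the second moment
`∑ₖ k ^ 2 B p k` equals `(p + 1) / 6`; all sums are finite since `B p` vanishes outside `[-p, p]`.
Every `B p` is even, so the sum over `1 ≤ k ≤ p` is half of the second moment.
-/

open Finset

theorem sum_Icc_comp_add_eq_of_vanishing {M : Type*} [AddCommMonoid M] {f : ℤ → M} {m a b c : ℤ}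
    (hf : ∀ k, m < |k| → f k = 0) (ha : a + c ≤ -m) (hb : m ≤ b + c) :
    ∑ k ∈ Icc a b, f (k + c) = ∑ k ∈ Icc (-m) m, f k := by
  have hshift := sum_map (Icc a b) (addRightEmbedding c) f
  simp only [map_add_right_Icc, addRightEmbedding_apply] at hshift
  rw [← hshift]
  refine (sum_subset (fun k hk => ?_) fun k _ hk => hf k ?_).symm
  · simp only [mem_Icc] at hk ⊢
    omega
  · simp only [mem_Icc, not_and_or, not_le] at hk
    exact lt_abs.2 (by omega)

theorem Function.Even.sum_Icc_neg {M : Type*} [AddCommMonoid M] {f : ℤ → M} (hf : f.Even)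
    (n : ℕ) : ∑ k ∈ Icc (-(n : ℤ)) n, f k = f 0 + 2 • ∑ k ∈ Icc (1 : ℤ) n, f k := by
  induction n with
  | zero => simp
  | succ n ih =>
    have hIcc : Icc (-((n + 1 : ℕ) : ℤ)) (n + 1 : ℕ)
        = insert (-(n + 1 : ℤ)) (insert (n + 1 : ℤ) (Icc (-(n : ℤ)) n)) := by
      ext k; simp only [mem_Icc, mem_insert]; omega
    have hIcc' : Icc (1 : ℤ) (n + 1 : ℕ) = insert (n + 1 : ℤ) (Icc (1 : ℤ) n) := by
      ext k; simp only [mem_Icc, mem_insert]; omega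
    rw [hIcc, hIcc', sum_insert (by simp; omega), sum_insert (by simp), sum_insert (by simp), ih,
      hf, smul_add, two_smul]
    abel

theorem sum_Icc_neg_one_one {M : Type*} [AddCommMonoid M] (f : ℤ → M) :
    ∑ k ∈ Icc (-1 : ℤ) 1, f k = f (-1) + f 0 + f 1 := by
  rw [show Icc (-1 : ℤ) 1 = {-1, 0, 1} by decide, sum_insert (by decide), sum_pair (by decide),
    add_assoc]

def BSplineMassRecursion (B : ℕ → ℤ → ℝ) : Prop :=
  ∀ p : ℕ, 2 ≤ p → ∀ k : ℤ,
      B p k = (((p : ℝ) + k + 1)^2 * B (p-1) (k+1)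
               - 2 * ((k : ℝ)^2 - p - (p : ℝ)^2) * B (p-1) k
               + ((p : ℝ) - k + 1)^2 * B (p-1) (k-1)) / (2 * p * (2 * p + 1))

namespace BSplineMassRecursion

variable {B : ℕ → ℤ → ℝ}

theorem mul_succ (hrec : BSplineMassRecursion B) {p : ℕ} (hp : 1 ≤ p) (k : ℤ) :
    2 * ((p : ℝ) + 1) * (2 * ((p : ℝ) + 1) + 1) * B (p + 1) k
      = ((p : ℝ) + 1 + k + 1)^2 * B p (k + 1)
        - 2 * ((k : ℝ)^2 - (p + 1) - ((p : ℝ) + 1)^2) * B p k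
        + ((p : ℝ) + 1 - k + 1)^2 * B p (k - 1) := by
  rw [hrec (p + 1) (by omega), Nat.add_sub_cancel]
  push_cast
  field_simp

theorem eq_zero_of_lt_abs (hrec : BSplineMassRecursion B)
    (h1supp : ∀ k : ℤ, 2 ≤ |k| → B 1 k = 0) {p : ℕ} (hp : 1 ≤ p) {k : ℤ} (hk : (p : ℤ) < |k|) :
    B p k = 0 := by
  induction p, hp using Nat.le_induction generalizing k with
  | base => exact h1supp k (by omega)
  | succ p hp ih =>
    push_cast at hk
    rw [lt_abs] at hk
    have hD : 2 * ((p : ℝ) + 1) * (2 * ((p : ℝ) + 1) + 1) ≠ 0 := by positivity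
    have := hrec.mul_succ hp k
    rw [ih (lt_abs.2 (by omega)), ih (lt_abs.2 (by omega)), ih (lt_abs.2 (by omega))] at this
    simpa [hD] using this

theorem even (hrec : BSplineMassRecursion B) (h11 : B 1 1 = 1/6) (h1m1 : B 1 (-1) = 1/6)
    (h1supp : ∀ k : ℤ, 2 ≤ |k| → B 1 k = 0) {p : ℕ} (hp : 1 ≤ p) : (B p).Even := by
  induction p, hp using Nat.le_induction with
  | base =>
    intro k
    by_cases hk : 2 ≤ |k|
    · rw [h1supp k hk, h1supp (-k) (by rwa [abs_neg])]
    · obtain rfl | rfl | rfl : k = -1 ∨ k = 0 ∨ k = 1 := by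
        rw [not_le, abs_lt] at hk; omega
      all_goals simp [h11, h1m1]
  | succ p hp ih =>
    intro k
    rw [hrec (p + 1) (by omega), hrec (p + 1) (by omega), Nat.add_sub_cancel,
      show -k + 1 = -(k - 1) by ring, show -k - 1 = -(k + 1) by ring, ih, ih, ih]
    push_cast
    ring

theorem mul_sum_succ (hrec : BSplineMassRecursion B) {p : ℕ} (hp : 1 ≤ p)
    (hB : ∀ k : ℤ, (p : ℤ) < |k| → B p k = 0) (C : ℤ → ℝ) :
    2 * ((p : ℝ) + 1) * (2 * ((p : ℝ) + 1) + 1)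
        * ∑ k ∈ Icc (-(p + 1 : ℤ)) (p + 1), C k * B (p + 1) k
      = ∑ j ∈ Icc (-(p : ℤ)) p,
          (C (j - 1) * ((p : ℝ) + 1 + j)^2 + 2 * C j * ((p : ℝ) + 1 + ((p : ℝ) + 1)^2 - (j : ℝ)^2)
            + C (j + 1) * ((p : ℝ) + 1 - j)^2) * B p j := by
  set f₁ : ℤ → ℝ := fun j => C (j - 1) * ((p : ℝ) + 1 + j)^2 * B p j
  set f₂ : ℤ → ℝ := fun j => 2 * C j * ((p : ℝ) + 1 + ((p : ℝ) + 1)^2 - (j : ℝ)^2) * B p j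
  set f₃ : ℤ → ℝ := fun j => C (j + 1) * ((p : ℝ) + 1 - j)^2 * B p j
  have hBmul (g : ℤ → ℝ) (k : ℤ) (hk : (p : ℤ) < |k|) : g k * B p k = 0 := by
    rw [hB k hk, mul_zero]
  calc _ = ∑ k ∈ Icc (-(p + 1 : ℤ)) (p + 1), (f₁ (k + 1) + f₂ (k + 0) + f₃ (k + -1)) := by
        rw [mul_sum]
        refine sum_congr rfl fun k _ => ?_
        rw [mul_left_comm, hrec.mul_succ hp]
        simp only [f₁, f₂, f₃]
        push_cast
        ring_nf
    _ = ∑ j ∈ Icc (-(p : ℤ)) p, (f₁ j + f₂ j + f₃ j) := by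
        simp only [sum_add_distrib]
        rw [sum_Icc_comp_add_eq_of_vanishing (f := f₁) (hBmul _) (by omega) (by omega),
          sum_Icc_comp_add_eq_of_vanishing (f := f₂) (hBmul _) (by omega) (by omega),
          sum_Icc_comp_add_eq_of_vanishing (f := f₃) (hBmul _) (by omega) (by omega)]
    _ = _ := sum_congr rfl fun j _ => by simp only [f₁, f₂, f₃]; ring

variable (hrec : BSplineMassRecursion B) (h10 : B 1 0 = 2/3) (h11 : B 1 1 = 1/6)
  (h1m1 : B 1 (-1) = 1/6) (h1supp : ∀ k : ℤ, 2 ≤ |k| → B 1 k = 0)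
include hrec h10 h11 h1m1 h1supp

theorem sum_eq_one {p : ℕ} (hp : 1 ≤ p) : ∑ k ∈ Icc (-(p : ℤ)) p, B p k = 1 := by
  induction p, hp using Nat.le_induction with
  | base => norm_num [sum_Icc_neg_one_one, h10, h11, h1m1]
  | succ p hp ih =>
    have hD : 2 * ((p : ℝ) + 1) * (2 * ((p : ℝ) + 1) + 1) ≠ 0 := by positivity
    refine mul_left_cancel₀ hD ?_
    push_cast
    calc _ = ∑ j ∈ Icc (-(p : ℤ)) p, (1 * ((p : ℝ) + 1 + j)^2
              + 2 * 1 * ((p : ℝ) + 1 + ((p : ℝ) + 1)^2 - (j : ℝ)^2) + 1 * ((p : ℝ) + 1 - j)^2)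
              * B p j := by
          simpa using hrec.mul_sum_succ hp (fun _ => hrec.eq_zero_of_lt_abs h1supp hp) (fun _ => 1)
      _ = 2 * ((p : ℝ) + 1) * (2 * ((p : ℝ) + 1) + 1) * ∑ j ∈ Icc (-(p : ℤ)) p, B p j := by
          rw [mul_sum]
          exact sum_congr rfl fun j _ => by ring
      _ = _ := by rw [ih, mul_one]

theorem sum_sq_mul_eq {p : ℕ} (hp : 1 ≤ p) :
    ∑ k ∈ Icc (-(p : ℤ)) p, (k : ℝ)^2 * B p k = ((p : ℝ) + 1) / 6 := by
  induction p, hp using Nat.le_induction with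
  | base => norm_num [sum_Icc_neg_one_one, h10, h11, h1m1]
  | succ p hp ih =>
    have hD : 2 * ((p : ℝ) + 1) * (2 * ((p : ℝ) + 1) + 1) ≠ 0 := by positivity
    refine mul_left_cancel₀ hD ?_
    push_cast
    calc _ = ∑ j ∈ Icc (-(p : ℤ)) p, (((j - 1 : ℤ) : ℝ)^2 * ((p : ℝ) + 1 + j)^2
              + 2 * (j : ℝ)^2 * ((p : ℝ) + 1 + ((p : ℝ) + 1)^2 - (j : ℝ)^2)
              + ((j + 1 : ℤ) : ℝ)^2 * ((p : ℝ) + 1 - j)^2) * B p j :=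
          hrec.mul_sum_succ hp (fun _ => hrec.eq_zero_of_lt_abs h1supp hp) (fun j => (j : ℝ)^2)
      _ = ∑ j ∈ Icc (-(p : ℤ)) p,
            (2 * (2 * (p : ℝ) + 1) * p * ((j : ℝ)^2 * B p j) + 2 * ((p : ℝ) + 1)^2 * B p j) :=
          sum_congr rfl fun j _ => by push_cast; ring
      _ = 2 * (2 * (p : ℝ) + 1) * p * (((p : ℝ) + 1) / 6) + 2 * ((p : ℝ) + 1)^2 * 1 := by
          rw [sum_add_distrib, ← mul_sum, ← mul_sum, ih, hrec.sum_eq_one h10 h11 h1m1 h1supp hp]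
      _ = _ := by ring

end BSplineMassRecursion

theorem stmt_2 (B : ℕ → ℤ → ℝ)
    (h10 : B 1 0 = 2/3) (h11 : B 1 1 = 1/6) (h1m1 : B 1 (-1) = 1/6)
    (h1supp : ∀ k : ℤ, 2 ≤ |k| → B 1 k = 0)
    (hrec : ∀ p : ℕ, 2 ≤ p → ∀ k : ℤ,
      B p k = (((p : ℝ) + k + 1)^2 * B (p-1) (k+1)
               - 2 * ((k : ℝ)^2 - p - (p : ℝ)^2) * B (p-1) k
               + ((p : ℝ) - k + 1)^2 * B (p-1) (k-1)) / (2 * p * (2 * p + 1))) :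
    ∀ p : ℕ, 1 ≤ p →
      (p : ℝ) + 1 = 12 * ∑ k ∈ Finset.Icc (1 : ℤ) (p : ℤ), (k : ℝ)^2 * B p k := by
  intro p hp
  have hrec : BSplineMassRecursion B := hrec
  have hmoment := hrec.sum_sq_mul_eq h10 h11 h1m1 h1supp hp
  have heven : (fun k : ℤ => (k : ℝ)^2 * B p k).Even := fun k => by
    simp only [Int.cast_neg, neg_sq, hrec.even h11 h1m1 h1supp hp k]
  rw [heven.sum_Icc_neg, Int.cast_zero, sq, zero_mul, zero_mul, zero_add, two_smul] at hmoment
  linarith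
end

section
/- For every positive integer $n$, the $n \times n$ matrix $\tilde\aleph$ with entries $\tilde\aleph_{m,k} = \frac{k^{2m+2}}{(2m+2)!}$ for $m, k = 1, \dots, n$ is invertible. Consequently, for any vector $\hat A \in \mathbb{R}^n$, the linear system $\aleph \hat B = -\tilde\aleph \hat A$ (with $\aleph_{m,k} = k^{2m}/(2m)!$) has a unique solution $\hat B \in \mathbb{R}^n$. -/
/-!
Up to the nonzero factor `1 / (2m + 2 + j)!` in row `m` and `(k + 1) ^ (2 + j)` in column `k`,
the matrix `((k + 1) ^ (2m + 2 + j) / (2m + 2 + j)!)` is the transposed Vandermonde matrix of the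
distinct nodes `(k + 1) ^ 2`. Hence both `ℵ` (`j = 0`) and `ℵ̃` (`j = 2`) are invertible, and
`ℵ B = -ℵ̃ A` has exactly one solution.
-/

open Matrix

namespace Matrix

theorem existsUnique_mulVec_eq {ι R : Type*} [Fintype ι] [DecidableEq ι] [CommRing R]
    {M : Matrix ι ι R} (hM : IsUnit M) (y : ι → R) : ∃! x, M *ᵥ x = y :=
  Function.Bijective.existsUnique
    ⟨mulVec_injective_of_isUnit hM, mulVec_surjective_iff_isUnit.mpr hM⟩ y

theorem isUnit_scaled_vandermonde_transpose {K : Type*} [Field K] {n : ℕ} {c d v : Fin n → K}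
    (hc : ∀ i, c i ≠ 0) (hd : ∀ j, d j ≠ 0) (hv : Function.Injective v) :
    IsUnit (of fun i j : Fin n => c i * d j * v j ^ (i : ℕ)) := by
  have hfactor : (of fun i j : Fin n => c i * d j * v j ^ (i : ℕ))
      = diagonal c * (vandermonde v)ᵀ * diagonal d := by
    ext i j
    simp only [of_apply, mul_diagonal, diagonal_mul, transpose_apply, vandermonde_apply]
    ring
  rw [hfactor]
  refine ((isUnit_diagonal.mpr ?_).mul ?_).mul (isUnit_diagonal.mpr ?_)
  · exact Pi.isUnit_iff.mpr fun i => (hc i).isUnit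
  · exact (isUnit_transpose _).mpr <|
      (isUnit_iff_isUnit_det _).mpr (det_vandermonde_ne_zero_iff.mpr hv).isUnit
  · exact Pi.isUnit_iff.mpr fun j => (hd j).isUnit

end Matrix

theorem isUnit_pow_div_factorial {n : ℕ} {x : Fin n → ℝ} (hpos : ∀ k, 0 < x k)
    (hinj : Function.Injective x) (j : ℕ) :
    IsUnit (of fun m k : Fin n =>
      x k ^ (2 * ((m : ℕ) + 1) + j) / (Nat.factorial (2 * ((m : ℕ) + 1) + j))) := by
  have hsq : Function.Injective fun k => x k ^ 2 := fun a b hab =>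
    hinj ((pow_left_inj₀ (hpos a).le (hpos b).le two_ne_zero).mp hab)
  have hfactor : (of fun m k : Fin n =>
      x k ^ (2 * ((m : ℕ) + 1) + j) / (Nat.factorial (2 * ((m : ℕ) + 1) + j)))
      = of fun m k : Fin n => ((Nat.factorial (2 * ((m : ℕ) + 1) + j) : ℝ))⁻¹ *
          x k ^ (2 + j) * (x k ^ 2) ^ (m : ℕ) := by
    ext m k
    simp only [of_apply, ← pow_mul]
    ring
  rw [hfactor]
  exact isUnit_scaled_vandermonde_transpose (fun m => by positivity)
    (fun k => (pow_pos (hpos k) _).ne') hsq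

theorem stmt_5_general (n : ℕ) :
    IsUnit (Matrix.of (fun m k : Fin n =>
      ((k : ℝ) + 1)^(2 * ((m : ℕ) + 1) + 2) / (Nat.factorial (2 * ((m : ℕ) + 1) + 2)))) ∧
    ∀ A : Fin n → ℝ, ∃! B : Fin n → ℝ,
      (Matrix.of (fun m k : Fin n =>
        ((k : ℝ) + 1)^(2 * ((m : ℕ) + 1)) / (Nat.factorial (2 * ((m : ℕ) + 1))))).mulVec B
      = - (Matrix.of (fun m k : Fin n =>
        ((k : ℝ) + 1)^(2 * ((m : ℕ) + 1) + 2) / (Nat.factorial (2 * ((m : ℕ) + 1) + 2)))).mulVec A := by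
  have hpos : ∀ k : Fin n, 0 < (k : ℝ) + 1 := fun k => by positivity
  have hinj : Function.Injective fun k : Fin n => (k : ℝ) + 1 := fun a b hab =>
    Fin.ext (by simpa using hab)
  exact ⟨isUnit_pow_div_factorial hpos hinj 2,
    fun A => existsUnique_mulVec_eq (isUnit_pow_div_factorial hpos hinj 0) _⟩

theorem stmt_5 (n : ℕ) (hn : 0 < n) :
    IsUnit (Matrix.of (fun m k : Fin n =>
      ((k : ℝ) + 1)^(2 * ((m : ℕ) + 1) + 2) / (Nat.factorial (2 * ((m : ℕ) + 1) + 2)))) ∧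
    ∀ A : Fin n → ℝ, ∃! B : Fin n → ℝ,
      (Matrix.of (fun m k : Fin n =>
        ((k : ℝ) + 1)^(2 * ((m : ℕ) + 1)) / (Nat.factorial (2 * ((m : ℕ) + 1))))).mulVec B
      = - (Matrix.of (fun m k : Fin n =>
        ((k : ℝ) + 1)^(2 * ((m : ℕ) + 1) + 2) / (Nat.factorial (2 * ((m : ℕ) + 1) + 2)))).mulVec A :=
  stmt_5_general n
end

section
/- Let $p \ge 2$ and let $(a_k)_{k=1}^p, (b_k)_{k=1}^p$ be real numbers satisfying $\sum_{k=1}^p \left( \frac{k^{2m}}{(2m)!} a_k + \frac{k^{2m-2}}{(2m-2)!} b_k \right) = 0$ for all $m = 2, 3, \dots, p$. Define $C_2 = 1$ and recursively, for $m \ge 2$, $C_{2m} = \sum_{k=1}^p \frac{(-1)^m k^{2m}}{(2m)!} a_k - \sum_{q=1}^{m-1} \sum_{k=1}^p C_{2m-2q} \frac{(-1)^q k^{2q}}{(2q)!} b_k$. Then $C_{2m} = 0$ for all $m = 2, 3, \dots, p$. -/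
/-!
Strong induction on `m`: for `1 ≤ q ≤ m - 2` the factor `C (m - q)` vanishes by induction, so the
recursion for `C m` keeps only its `q = m - 1` term, whose factor is `C 1 = 1`. What remains is
`(-1)^m` times the sum assumed to vanish, because `(-1)^(m-1) = -(-1)^m`.
-/

open Finset

theorem eq_zero_of_eq_sub_sum_Icc_mul {R : Type*} [Ring R] (N : ℕ) (A B C : ℕ → R)
    (hC1 : C 1 = 1)
    (hrec : ∀ m, 2 ≤ m → m ≤ N → C m = A m - ∑ q ∈ Icc 1 (m - 1), C (m - q) * B q)
    (hAB : ∀ m, 2 ≤ m → m ≤ N → A m = B (m - 1)) :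
    ∀ m, 2 ≤ m → m ≤ N → C m = 0 := by
  intro m
  induction m using Nat.strong_induction_on with
  | _ m ih =>
    intro hm2 hmN
    have hlast : ∑ q ∈ Icc 1 (m - 1), C (m - q) * B q = B (m - 1) := by
      rw [sum_eq_single_of_mem (m - 1) (by simp; omega)]
      · rw [show m - (m - 1) = 1 by omega, hC1, one_mul]
      · intro q hq hq_ne
        rw [mem_Icc] at hq
        rw [ih (m - q) (by omega) (by omega) (by omega), zero_mul]
    rw [hrec m hm2 hmN, hlast, hAB m hm2 hmN, sub_self]

theorem sum_neg_one_pow_sub_sum_neg_one_pow_pred {ι : Type*} (s : Finset ι) (x a b : ι → ℝ)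
    {m : ℕ} (hm : 1 ≤ m) :
    ∑ k ∈ s, (-1 : ℝ) ^ m * x k ^ (2 * m) / (2 * m).factorial * a k
        - ∑ k ∈ s, (-1 : ℝ) ^ (m - 1) * x k ^ (2 * (m - 1)) / (2 * (m - 1)).factorial * b k
      = (-1 : ℝ) ^ m * ∑ k ∈ s, (x k ^ (2 * m) / (2 * m).factorial * a k
          + x k ^ (2 * m - 2) / (2 * m - 2).factorial * b k) := by
  have hsign : (-1 : ℝ) ^ (m - 1) = -(-1) ^ m := by
    rw [← pow_sub_one_mul (by omega : m ≠ 0) (-1 : ℝ)]; ring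
  rw [show 2 * (m - 1) = 2 * m - 2 by omega, hsign, mul_sum, ← sum_sub_distrib]
  refine sum_congr rfl fun k _ => ?_
  ring

theorem stmt_6_general (p : ℕ) (a b : ℕ → ℝ)
    (hab : ∀ m : ℕ, 2 ≤ m → m ≤ p →
      ∑ k ∈ Finset.Icc 1 p, ((k : ℝ)^(2*m) / Nat.factorial (2*m) * a k
        + (k : ℝ)^(2*m-2) / Nat.factorial (2*m-2) * b k) = 0)
    (C : ℕ → ℝ) (hC1 : C 1 = 1)
    (hCrec : ∀ m : ℕ, 2 ≤ m →
      C m = ∑ k ∈ Finset.Icc 1 p, (-1 : ℝ)^m * (k : ℝ)^(2*m) / Nat.factorial (2*m) * a k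
        - ∑ q ∈ Finset.Icc 1 (m-1), ∑ k ∈ Finset.Icc 1 p,
            C (m - q) * ((-1 : ℝ)^q * (k : ℝ)^(2*q) / Nat.factorial (2*q)) * b k) :
    ∀ m : ℕ, 2 ≤ m → m ≤ p → C m = 0 := by
  refine eq_zero_of_eq_sub_sum_Icc_mul p
    (fun m => ∑ k ∈ Icc 1 p, (-1 : ℝ) ^ m * (k : ℝ) ^ (2 * m) / (2 * m).factorial * a k)
    (fun q => ∑ k ∈ Icc 1 p, (-1 : ℝ) ^ q * (k : ℝ) ^ (2 * q) / (2 * q).factorial * b k)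
    C hC1 (fun m hm2 _ => ?_) (fun m hm2 hmp => ?_)
  · simp only [hCrec m hm2, mul_sum, mul_assoc]
  · rw [← sub_eq_zero, sum_neg_one_pow_sub_sum_neg_one_pow_pred _ _ _ _ (by omega),
      hab m hm2 hmp, mul_zero]

theorem stmt_6 (p : ℕ) (hp : 2 ≤ p) (a b : ℕ → ℝ)
    (hab : ∀ m : ℕ, 2 ≤ m → m ≤ p →
      ∑ k ∈ Finset.Icc 1 p, ((k : ℝ)^(2*m) / Nat.factorial (2*m) * a k
        + (k : ℝ)^(2*m-2) / Nat.factorial (2*m-2) * b k) = 0)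
    (C : ℕ → ℝ) (hC1 : C 1 = 1)
    (hCrec : ∀ m : ℕ, 2 ≤ m →
      C m = ∑ k ∈ Finset.Icc 1 p, (-1 : ℝ)^m * (k : ℝ)^(2*m) / Nat.factorial (2*m) * a k
        - ∑ q ∈ Finset.Icc 1 (m-1), ∑ k ∈ Finset.Icc 1 p,
            C (m - q) * ((-1 : ℝ)^q * (k : ℝ)^(2*q) / Nat.factorial (2*q)) * b k) :
    ∀ m : ℕ, 2 ≤ m → m ≤ p → C m = 0 :=
  stmt_6_general p a b hab C hC1 hCrec
end

section
/- Let $p \ge 1$ and let $(a_k), (b_k), (\tilde b_k)$ be real sequences for $k = 1, \dots, p$ such that $\sum_{k=1}^p \left( \frac{k^{2m}}{(2m)!} a_k + \frac{k^{2m-2}}{(2m-2)!} b_k \right) = 0$ and $\sum_{k=1}^p \left( \frac{k^{2m}}{(2m)!} a_k + \frac{k^{2m-2}}{(2m-2)!} \tilde b_k \right) = 0$ for all $m = 2, \dots, p$, and such that $\sum_{k=1}^p \frac{k^{2p}}{(2p)!} (\tilde b_k - b_k) \ne 0$. Define $\tau = \dfrac{\sum_{k=1}^p \frac{k^{2p+2}}{(2p+2)!}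 a_k + \frac{k^{2p}}{(2p)!} \tilde b_k}{\sum_{k=1}^p \frac{k^{2p}}{(2p)!} (\tilde b_k - b_k)}$ and $b^\tau_k = \tau b_k + (1-\tau) \tilde b_k$. Then $\sum_{k=1}^p \left( \frac{k^{2m}}{(2m)!} a_k + \frac{k^{2m-2}}{(2m-2)!} b^\tau_k \right) = 0$ for all $m = 2, 3, \dots, p+1$. -/
/-!
The defect `∑ₖ k^{2m}/(2m)! aₖ + k^{2m-2}/(2m-2)! bₖ` is affine in the mass entries `b`, so for
`m ≤ p` the blend inherits the vanishing defect of both rules, whatever `τ` is. At `m = p + 1`,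
with `e` and `ẽ` the defects of `b` and `b̃`, the blended defect is `τ e + (1 - τ) ẽ`; the
numerator of `τ` is `ẽ` and its denominator is `ẽ - e`, which is exactly the root of this
affine function of `τ`.
-/

open Finset

noncomputable def dispersionDefect (p : ℕ) (a b : ℕ → ℝ) (m : ℕ) : ℝ :=
  ∑ k ∈ Icc 1 p, ((k : ℝ)^(2*m) / Nat.factorial (2*m) * a k
    + (k : ℝ)^(2*m-2) / Nat.factorial (2*m-2) * b k)

lemma dispersionDefect_blend (p : ℕ) (a b b' : ℕ → ℝ) (τ : ℝ) (m : ℕ) :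
    dispersionDefect p a (fun k ↦ τ * b k + (1 - τ) * b' k) m
      = τ * dispersionDefect p a b m + (1 - τ) * dispersionDefect p a b' m := by
  simp only [dispersionDefect, mul_sum, ← sum_add_distrib]
  exact sum_congr rfl fun k _ ↦ by ring

lemma dispersionDefect_succ (p : ℕ) (a b : ℕ → ℝ) (m : ℕ) :
    dispersionDefect p a b (m + 1) = ∑ k ∈ Icc 1 p, ((k : ℝ)^(2*m+2) / Nat.factorial (2*m+2) * a k
      + (k : ℝ)^(2*m) / Nat.factorial (2*m) * b k) := by
  have h : 2 * (m + 1) - 2 = 2 * m := by omega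
  rw [dispersionDefect, h, mul_add_one]

lemma dispersionDefect_sub (p : ℕ) (a b b' : ℕ → ℝ) (m : ℕ) :
    dispersionDefect p a b' m - dispersionDefect p a b m
      = ∑ k ∈ Icc 1 p, (k : ℝ)^(2*m-2) / Nat.factorial (2*m-2) * (b' k - b k) := by
  rw [dispersionDefect, dispersionDefect, ← sum_sub_distrib]
  exact sum_congr rfl fun k _ ↦ by ring

lemma blend_eq_zero_of_eq_div {x y τ : ℝ} (hxy : y - x ≠ 0) (hτ : τ = y / (y - x)) :
    τ * x + (1 - τ) * y = 0 := by
  subst hτ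
  field_simp
  ring

theorem stmt_8_general (p : ℕ) (a b btil : ℕ → ℝ)
    (hb : ∀ m : ℕ, 2 ≤ m → m ≤ p →
      ∑ k ∈ Finset.Icc 1 p, ((k : ℝ)^(2*m) / Nat.factorial (2*m) * a k
        + (k : ℝ)^(2*m-2) / Nat.factorial (2*m-2) * b k) = 0)
    (hbtil : ∀ m : ℕ, 2 ≤ m → m ≤ p →
      ∑ k ∈ Finset.Icc 1 p, ((k : ℝ)^(2*m) / Nat.factorial (2*m) * a k
        + (k : ℝ)^(2*m-2) / Nat.factorial (2*m-2) * btil k) = 0)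
    (hne : ∑ k ∈ Finset.Icc 1 p, (k : ℝ)^(2*p) / Nat.factorial (2*p) * (btil k - b k) ≠ 0)
    (τ : ℝ)
    (hτ : τ = (∑ k ∈ Finset.Icc 1 p, ((k : ℝ)^(2*p+2) / Nat.factorial (2*p+2) * a k
        + (k : ℝ)^(2*p) / Nat.factorial (2*p) * btil k))
      / ∑ k ∈ Finset.Icc 1 p, (k : ℝ)^(2*p) / Nat.factorial (2*p) * (btil k - b k))
    (bτ : ℕ → ℝ) (hbτ : ∀ k, bτ k = τ * b k + (1 - τ) * btil k) :
    ∀ m : ℕ, 2 ≤ m → m ≤ p + 1 →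
      ∑ k ∈ Finset.Icc 1 p, ((k : ℝ)^(2*m) / Nat.factorial (2*m) * a k
        + (k : ℝ)^(2*m-2) / Nat.factorial (2*m-2) * bτ k) = 0 := by
  intro m hm2 hmp
  obtain rfl : bτ = fun k ↦ τ * b k + (1 - τ) * btil k := funext hbτ
  change dispersionDefect p a _ m = 0
  rw [dispersionDefect_blend]
  rcases Nat.lt_or_ge m (p + 1) with hlt | hge
  · rw [dispersionDefect, dispersionDefect, hb m hm2 (by omega), hbtil m hm2 (by omega)]
    ring
  · obtain rfl : m = p + 1 := by omega
    have hdiff := dispersionDefect_sub p a b btil (p + 1)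
    rw [show 2 * (p + 1) - 2 = 2 * p by omega] at hdiff
    rw [← hdiff] at hne hτ
    exact blend_eq_zero_of_eq_div hne (by rwa [dispersionDefect_succ])

theorem stmt_8 (p : ℕ) (hp : 1 ≤ p) (a b btil : ℕ → ℝ)
    (hb : ∀ m : ℕ, 2 ≤ m → m ≤ p →
      ∑ k ∈ Finset.Icc 1 p, ((k : ℝ)^(2*m) / Nat.factorial (2*m) * a k
        + (k : ℝ)^(2*m-2) / Nat.factorial (2*m-2) * b k) = 0)
    (hbtil : ∀ m : ℕ, 2 ≤ m → m ≤ p →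
      ∑ k ∈ Finset.Icc 1 p, ((k : ℝ)^(2*m) / Nat.factorial (2*m) * a k
        + (k : ℝ)^(2*m-2) / Nat.factorial (2*m-2) * btil k) = 0)
    (hne : ∑ k ∈ Finset.Icc 1 p, (k : ℝ)^(2*p) / Nat.factorial (2*p) * (btil k - b k) ≠ 0)
    (τ : ℝ)
    (hτ : τ = (∑ k ∈ Finset.Icc 1 p, ((k : ℝ)^(2*p+2) / Nat.factorial (2*p+2) * a k
        + (k : ℝ)^(2*p) / Nat.factorial (2*p) * btil k))
      / ∑ k ∈ Finset.Icc 1 p, (k : ℝ)^(2*p) / Nat.factorial (2*p) * (btil k - b k))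
    (bτ : ℕ → ℝ) (hbτ : ∀ k, bτ k = τ * b k + (1 - τ) * btil k) :
    ∀ m : ℕ, 2 ≤ m → m ≤ p + 1 →
      ∑ k ∈ Finset.Icc 1 p, ((k : ℝ)^(2*m) / Nat.factorial (2*m) * a k
        + (k : ℝ)^(2*m-2) / Nat.factorial (2*m-2) * bτ k) = 0 :=
  stmt_8_general p a b btil hb hbtil hne τ hτ bτ hbτ
end

section
/- Let $p \ge 1$, let $(a_k)_{k=1}^p, (b_k)_{k=1}^p$ be real numbers, and suppose the dispersion identities $\sum_{k=1}^p \left( \frac{k^{2m}}{(2m)!} a_k + \frac{k^{2m-2}}{(2m-2)!} b_k \right) = 0$ hold for $m = 2, \dots, p+1$, together with $\sum_{k=1}^p k^2 a_k = -1$ and $b_0 + 2\sum_{k=1}^p b_k = 1$ where $b_0$ is defined by the latter. Define $f(\Lambda) = \dfrac{a_0 + 2 \sum_{k=1}^p a_k \cos(k\Lambda)}{b_0 + 2 \sum_{k=1}^p b_k \cos(k\Lambda)}$ with $a_0 = -2\sum_{k=1}^p a_k$. Then $f(\Lambda) - \Lambda^2 = O(\Lambda^{2p+4})$ as $\Lambda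 \to 0$. -/
open Asymptotics Filter

/-!
Replace each `cos (k Λ)` by its Taylor polynomial: of degree `2p + 2` in the numerator and `2p`
in the denominator, with errors `O(Λ^(2p+4))` and `O(Λ^(2p+2))`. After expanding in powers of `Λ`,
the consistency condition, the normalisation of `b₀` and the dispersion identities say exactly that
the truncated numerator equals `Λ²` times the truncated denominator, so the numerator minus
`Λ²` times the denominator is `O(Λ^(2p+4))`. Since the denominator tends to `1`, dividing by it
preserves this bound.
-/

open Finset Topology
open scoped Nat

theorem Asymptotics.IsBigO.div_sub_of_tendsto {α 𝕜 : Type*} [NormedField 𝕜] {l : Filter α}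
    {N D q g : α → 𝕜} {c : 𝕜} (h : (fun x ↦ N x - q x * D x) =O[l] g) (hD : Tendsto D l (𝓝 c))
    (hc : c ≠ 0) : (fun x ↦ N x / D x - q x) =O[l] g := by
  have hquot : (fun x ↦ (N x - q x * D x) * (D x)⁻¹) =ᶠ[l] fun x ↦ N x / D x - q x := by
    filter_upwards [hD.eventually_ne hc] with x hx
    field_simp
  simpa using (h.mul ((hD.inv₀ hc).isBigO_one 𝕜)).congr' hquot EventuallyEq.rfl

noncomputable def cosTaylor (M : ℕ) (x : ℝ) : ℝ :=
  ∑ n ∈ range M, (-1) ^ n * x ^ (2 * n) / (2 * n)!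

theorem cos_sub_cosTaylor_isBigO (M : ℕ) :
    (fun x ↦ Real.cos x - cosTaylor M x) =O[𝓝 0] (· ^ (2 * M)) := by
  refine isBigO_iff.2 ⟨∑' n, 1 / (n ! : ℝ), ?_⟩
  have hsummable : Summable fun n ↦ 1 / (n ! : ℝ) := by
    simpa using Real.summable_pow_div_factorial 1
  filter_upwards [Metric.closedBall_mem_nhds (0 : ℝ) one_pos] with x hx
  have hx : |x| ≤ 1 := by simpa using hx
  have htail : HasSum (fun n ↦ (-1) ^ (n + M) * x ^ (2 * (n + M)) / (2 * (n + M))!)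
      (Real.cos x - cosTaylor M x) :=
    (hasSum_nat_add_iff' M).2 (Real.hasSum_cos x)
  have hbound (n : ℕ) : ‖(-1) ^ (n + M) * x ^ (2 * (n + M)) / ((2 * (n + M))! : ℝ)‖
      ≤ ‖x ^ (2 * M)‖ * (1 / n !) := by
    have hpow : |x| ^ (2 * (n + M)) ≤ |x| ^ (2 * M) :=
      pow_le_pow_of_le_one (abs_nonneg x) hx (by omega)
    have hfact : (n ! : ℝ) ≤ (2 * (n + M))! := by exact_mod_cast Nat.factorial_le (by omega)
    simp only [norm_div, norm_mul, norm_pow, norm_neg, norm_one, one_pow, one_mul,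
      Real.norm_eq_abs, Nat.abs_cast, ← div_eq_mul_one_div]
    exact div_le_div₀ (by positivity) hpow (by positivity) hfact
  have := htail.norm_le_of_bounded (hsummable.mul_left ‖x ^ (2 * M)‖).hasSum hbound
  rwa [tsum_mul_left, mul_comm] at this

theorem sum_mul_cos_sub_cosTaylor_isBigO (s : Finset ℕ) (c : ℕ → ℝ) (M : ℕ) :
    (fun Λ : ℝ ↦ ∑ k ∈ s, c k * (Real.cos (k * Λ) - cosTaylor M (k * Λ)))
      =O[𝓝 0] (· ^ (2 * M)) := by
  refine IsBigO.fun_sum fun k _ ↦ IsBigO.const_mul_left ?_ (c k)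
  have hk : Tendsto (fun Λ : ℝ ↦ k * Λ) (𝓝 0) (𝓝 0) := by
    simpa using (continuous_const_mul (k : ℝ)).tendsto 0
  refine ((cos_sub_cosTaylor_isBigO M).comp_tendsto hk).trans ?_
  simpa only [Function.comp_def, mul_pow] using
    (isBigO_refl (· ^ (2 * M)) (𝓝 (0 : ℝ))).const_mul_left ((k : ℝ) ^ (2 * M))

theorem sum_mul_cosTaylor (s : Finset ℕ) (c : ℕ → ℝ) (M : ℕ) (Λ : ℝ) :
    ∑ k ∈ s, c k * cosTaylor M (k * Λ) =
      ∑ n ∈ range M, (-1) ^ n * Λ ^ (2 * n) / (2 * n)! * ∑ k ∈ s, (k : ℝ) ^ (2 * n) * c k := by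
  simp_rw [cosTaylor, mul_sum]
  rw [sum_comm]
  refine sum_congr rfl fun n _ ↦ sum_congr rfl fun k _ ↦ ?_
  ring

theorem cosTaylor_dispersion_identity (s : Finset ℕ) (p : ℕ) (a b : ℕ → ℝ)
    (hid : ∀ m : ℕ, 2 ≤ m → m ≤ p + 1 →
      ∑ k ∈ s, ((k : ℝ) ^ (2 * m) / (2 * m)! * a k
        + (k : ℝ) ^ (2 * m - 2) / (2 * m - 2)! * b k) = 0)
    (hcons : ∑ k ∈ s, (k : ℝ) ^ 2 * a k = -1) (Λ : ℝ) :
    -2 * ∑ k ∈ s, a k + 2 * ∑ k ∈ s, a k * cosTaylor (p + 2) (k * Λ)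
      = Λ ^ 2 * (1 - 2 * ∑ k ∈ s, b k + 2 * ∑ k ∈ s, b k * cosTaylor (p + 1) (k * Λ)) := by
  rw [sum_mul_cosTaylor, sum_mul_cosTaylor, sum_range_succ', sum_range_succ', sum_range_succ']
  have hterm : ∀ n ∈ range p,
      (-1) ^ (n + 2) * Λ ^ (2 * (n + 2)) / (2 * (n + 2))! * ∑ k ∈ s, (k : ℝ) ^ (2 * (n + 2)) * a k
        = Λ ^ 2 * ((-1) ^ (n + 1) * Λ ^ (2 * (n + 1)) / (2 * (n + 1))!
          * ∑ k ∈ s, (k : ℝ) ^ (2 * (n + 1)) * b k) := by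
    intro n hn
    have h := hid (n + 2) (by simp at hn; omega) (by simp at hn; omega)
    rw [show 2 * (n + 2) - 2 = 2 * (n + 1) by omega, sum_add_distrib] at h
    simp only [div_mul_eq_mul_div, ← sum_div] at h
    linear_combination (-1) ^ n * Λ ^ (2 * (n + 2)) * h
  rw [sum_congr rfl hterm, ← mul_sum]
  simp only [zero_add, mul_zero, pow_zero, Nat.factorial_zero, one_mul, mul_one, Nat.cast_one,
    div_one]
  rw [hcons, Nat.factorial_two]
  push_cast
  ring

theorem stmt_18_general (p : ℕ) (a b : ℕ → ℝ)
    (hid : ∀ m : ℕ, 2 ≤ m → m ≤ p + 1 →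
      ∑ k ∈ Finset.Icc 1 p, ((k : ℝ)^(2*m) / Nat.factorial (2*m) * a k
        + (k : ℝ)^(2*m-2) / Nat.factorial (2*m-2) * b k) = 0)
    (hcons : ∑ k ∈ Finset.Icc 1 p, (k : ℝ)^2 * a k = -1)
    (b₀ : ℝ) (hb₀ : b₀ = 1 - 2 * ∑ k ∈ Finset.Icc 1 p, b k)
    (a₀ : ℝ) (ha₀ : a₀ = -2 * ∑ k ∈ Finset.Icc 1 p, a k) :
    (fun Λ : ℝ =>
        (a₀ + 2 * ∑ k ∈ Finset.Icc 1 p, a k * Real.cos (k * Λ))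
          / (b₀ + 2 * ∑ k ∈ Finset.Icc 1 p, b k * Real.cos (k * Λ))
        - Λ^2)
      =O[nhds 0] (fun Λ : ℝ => Λ^(2*p+4)) := by
  subst hb₀ ha₀
  have hA : (fun Λ : ℝ ↦ 2 * ∑ k ∈ Icc 1 p, a k * (Real.cos (k * Λ) - cosTaylor (p + 2) (k * Λ)))
      =O[𝓝 0] (· ^ (2 * p + 4)) :=
    (sum_mul_cos_sub_cosTaylor_isBigO _ a (p + 2)).const_mul_left 2
  have hB : (fun Λ : ℝ ↦
      Λ ^ 2 * (2 * ∑ k ∈ Icc 1 p, b k * (Real.cos (k * Λ) - cosTaylor (p + 1) (k * Λ))))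
      =O[𝓝 0] (· ^ (2 * p + 4)) := by
    refine ((isBigO_refl (· ^ 2) (𝓝 (0 : ℝ))).mul
      ((sum_mul_cos_sub_cosTaylor_isBigO _ b (p + 1)).const_mul_left 2)).congr_right fun Λ ↦ ?_
    ring
  have hnum : (fun Λ : ℝ ↦ -2 * ∑ k ∈ Icc 1 p, a k + 2 * ∑ k ∈ Icc 1 p, a k * Real.cos (k * Λ)
      - Λ ^ 2 * (1 - 2 * ∑ k ∈ Icc 1 p, b k + 2 * ∑ k ∈ Icc 1 p, b k * Real.cos (k * Λ)))
      =O[𝓝 0] (· ^ (2 * p + 4)) := (hA.sub hB).congr_left fun Λ ↦ by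
    simp only [mul_sub, sum_sub_distrib]
    linear_combination -cosTaylor_dispersion_identity _ p a b hid hcons Λ
  refine hnum.div_sub_of_tendsto ((Continuous.tendsto' ?_ 0 1 ?_)) one_ne_zero
  · fun_prop
  · simp

theorem stmt_18 (p : ℕ) (hp : 1 ≤ p) (a b : ℕ → ℝ)
    (hid : ∀ m : ℕ, 2 ≤ m → m ≤ p + 1 →
      ∑ k ∈ Finset.Icc 1 p, ((k : ℝ)^(2*m) / Nat.factorial (2*m) * a k
        + (k : ℝ)^(2*m-2) / Nat.factorial (2*m-2) * b k) = 0)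
    (hcons : ∑ k ∈ Finset.Icc 1 p, (k : ℝ)^2 * a k = -1)
    (b₀ : ℝ) (hb₀ : b₀ = 1 - 2 * ∑ k ∈ Finset.Icc 1 p, b k)
    (a₀ : ℝ) (ha₀ : a₀ = -2 * ∑ k ∈ Finset.Icc 1 p, a k) :
    (fun Λ : ℝ =>
        (a₀ + 2 * ∑ k ∈ Finset.Icc 1 p, a k * Real.cos (k * Λ))
          / (b₀ + 2 * ∑ k ∈ Finset.Icc 1 p, b k * Real.cos (k * Λ))
        - Λ^2)
      =O[nhds 0] (fun Λ : ℝ => Λ^(2*p+4)) :=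
  stmt_18_general p a b hid hcons b₀ hb₀ a₀ ha₀
end
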